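/- Let 0 < a < b and n ≥ 1. If x₀ < x₁ < ⋯ < x_n are points of a Chebyshev alternance for p_{n,a,b} − 1 (i.e. |p_{n,a,b}(x_j) − 1| = ε(n,a,b) for all j with alternating signs), then x₀ = a and x_n = b. -/

import Mathlib

/-- `oddPoly n α` is the odd polynomial `α 0 * x + α 1 * x^3 + ⋯ + α (n-1) * x^(2n-1)`.
The functions of this form are exactly the elements of the space `L_n` of odd
polynomials of degree at most `2n-1`. -/
noncomputable def oddPoly (n : ℕ) (α : ℕ → ℝ) : ℝ → ℝ :=
  fun x => ∑ i ∈ Finset.range n, α i * x ^ (2 * i + 1)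

/-- The uniform (Chebyshev) distance `‖f − g‖_{C[a,b]} = sup_{x ∈ [a,b]} |f x − g x|`. -/
noncomputable def unifErr (a b : ℝ) (f g : ℝ → ℝ) : ℝ :=
  sSup ((fun x => |f x - g x|) '' Set.Icc a b)

/-!
Every point of an alternance that lies in the open interval `(a, b)` is an interior
extremum of `p - 1`, hence a critical point of `p`. Since `p' (x) = r (x²)` for a polynomial
`r` of degree `< n`, and `x ↦ x²` is injective on `(0, ∞)`, the polynomial `r` has fewer than `n`
roots there. If `x₀ > a` (or `xₙ < b`), the `n` points `x₀, …, x_{n-1}` (or `x₁, …, xₙ`) would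
all be interior, forcing `r = 0`, so `p = 0`; but `p - 1 = -1` does not alternate.
-/

open Finset Polynomial Filter Topology

lemma abs_sub_le_unifErr {f g : ℝ → ℝ} (hf : Continuous f) (hg : Continuous g) {a b y : ℝ}
    (hy : y ∈ Set.Icc a b) : |f y - g y| ≤ unifErr a b f g :=
  le_csSup ((isCompact_Icc.image (by fun_prop)).bddAbove) (Set.mem_image_of_mem _ hy)

lemma isLocalExtr_of_forall_abs_le {X : Type*} [TopologicalSpace X] {f : X → ℝ} {s : Set X}
    {y : X} (hs : s ∈ 𝓝 y) (h : ∀ z ∈ s, |f z| ≤ |f y|) : IsLocalExtr f y := by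
  rcases le_or_gt 0 (f y) with hy | hy
  · refine Or.inr (eventually_of_mem hs fun z hz => ?_)
    linarith [le_abs_self (f z), h z hz, abs_of_nonneg hy]
  · refine Or.inl (eventually_of_mem hs fun z hz => ?_)
    linarith [neg_abs_le (f z), h z hz, abs_of_neg hy]

section OddPoly

variable (n : ℕ) (α : ℕ → ℝ)

lemma continuous_oddPoly : Continuous (oddPoly n α) := by
  unfold oddPoly
  fun_prop

lemma oddPoly_zero_left : oddPoly 0 α = 0 := by
  funext x
  simp [oddPoly]

noncomputable def oddPolyDerivSq : ℝ[X] :=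
  ∑ i ∈ range n, C ((2 * i + 1) * α i) * X ^ i

lemma hasDerivAt_oddPoly (x : ℝ) :
    HasDerivAt (oddPoly n α) ((oddPolyDerivSq n α).eval (x ^ 2)) x := by
  refine (HasDerivAt.fun_sum (u := range n) fun i _ =>
    (hasDerivAt_pow (2 * i + 1) x).const_mul (α i)).congr_deriv ?_
  simp only [oddPolyDerivSq, eval_finsetSum, eval_mul, eval_C, eval_pow, eval_X]
  refine sum_congr rfl fun i _ => ?_
  rw [Nat.add_sub_cancel, ← pow_mul]
  push_cast
  ring

lemma natDegree_oddPolyDerivSq_lt (hn : 0 < n) : (oddPolyDerivSq n α).natDegree < n := by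
  have hle : (oddPolyDerivSq n α).natDegree ≤ n - 1 :=
    natDegree_sum_le_of_forall_le _ _ fun i hi =>
      (natDegree_C_mul_X_pow_le _ i).trans (Nat.le_pred_of_lt (mem_range.mp hi))
  omega

lemma oddPoly_eq_zero_of_oddPolyDerivSq_eq_zero (h : oddPolyDerivSq n α = 0) :
    oddPoly n α = 0 := by
  have hderiv (x : ℝ) : HasDerivAt (oddPoly n α) 0 x := by
    simpa [h] using hasDerivAt_oddPoly n α x
  funext x
  rw [is_const_of_deriv_eq_zero (fun y => (hderiv y).differentiableAt)
    (fun y => (hderiv y).deriv) x 0]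
  simp [oddPoly]

lemma oddPolyDerivSq_eval_sq_eq_zero_of_abs_sub_one_eq_unifErr {a b y : ℝ}
    (hy : y ∈ Set.Ioo a b)
    (habs : |oddPoly n α y - 1| = unifErr a b (fun _ => 1) (oddPoly n α)) :
    (oddPolyDerivSq n α).eval (y ^ 2) = 0 := by
  have hextr : IsLocalExtr (fun z => oddPoly n α z - 1) y := by
    refine isLocalExtr_of_forall_abs_le (Ioo_mem_nhds hy.1 hy.2) fun z hz => ?_
    rw [habs, abs_sub_comm]
    exact abs_sub_le_unifErr continuous_const (continuous_oddPoly n α) (Set.Ioo_subset_Icc_self hz)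
  exact hextr.hasDerivAt_eq_zero ((hasDerivAt_oddPoly n α y).sub_const 1)

theorem oddPoly_eq_zero_of_injective_of_abs_sub_one_eq_unifErr {a b : ℝ} (ha : 0 ≤ a)
    {s : Fin n → ℝ} (hs : Function.Injective s) (hmem : ∀ j, s j ∈ Set.Ioo a b)
    (habs : ∀ j, |oddPoly n α (s j) - 1| = unifErr a b (fun _ => 1) (oddPoly n α)) :
    oddPoly n α = 0 := by
  obtain rfl | hn := n.eq_zero_or_pos
  · exact oddPoly_zero_left α
  have hpos (j : Fin n) : 0 < s j := ha.trans_lt (hmem j).1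
  have hsq : Function.Injective fun j => s j ^ 2 := fun j k hjk =>
    hs ((pow_left_inj₀ (hpos j).le (hpos k).le two_ne_zero).mp hjk)
  refine oddPoly_eq_zero_of_oddPolyDerivSq_eq_zero n α <|
    eq_zero_of_natDegree_lt_card_of_eval_eq_zero _ hsq
      (fun j => oddPolyDerivSq_eval_sq_eq_zero_of_abs_sub_one_eq_unifErr n α (hmem j) (habs j)) ?_
  simpa using natDegree_oddPolyDerivSq_lt n α hn

end OddPoly

theorem alternance_endpoints_general (n : ℕ) (hn : 1 ≤ n) (a b : ℝ) (ha : 0 < a)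
    (α : ℕ → ℝ)
    (x : Fin (n + 1) → ℝ) (hmono : StrictMono x) (hmem : ∀ j, x j ∈ Set.Icc a b)
    (habs : ∀ j, |oddPoly n α (x j) - 1| = unifErr a b (fun _ => (1:ℝ)) (oddPoly n α))
    (halt : ∀ j : Fin n,
      oddPoly n α (x j.succ) - 1 = -(oddPoly n α (x j.castSucc) - 1)) :
    x 0 = a ∧ x (Fin.last n) = b := by
  have hp : oddPoly n α ≠ 0 := fun h => by
    have := halt ⟨0, hn⟩
    simp only [h, Pi.zero_apply] at this
    norm_num at this
  constructor
  · by_contra h0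
    have hx0 : a < x 0 := (hmem 0).1.lt_of_ne (Ne.symm h0)
    refine hp (oddPoly_eq_zero_of_injective_of_abs_sub_one_eq_unifErr n α ha.le
      (hmono.injective.comp (Fin.castSucc_injective n)) (fun j => ⟨?_, ?_⟩) (fun j => habs _))
    · exact hx0.trans_le (hmono.monotone (Fin.zero_le _))
    · exact (hmono (Fin.castSucc_lt_last j)).trans_le (hmem _).2
  · by_contra hn0
    have hxn : x (Fin.last n) < b := (hmem _).2.lt_of_ne hn0
    refine hp (oddPoly_eq_zero_of_injective_of_abs_sub_one_eq_unifErr n α ha.le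
      (hmono.injective.comp (Fin.succ_injective n)) (fun j => ⟨?_, ?_⟩) (fun j => habs _))
    · exact (hmem 0).1.trans_lt (hmono (Fin.succ_pos j))
    · exact (hmono.monotone (Fin.le_last _)).trans_lt hxn

/-- If `x₀ < ⋯ < x_n` form a Chebyshev alternance for `p_{n,a,b} − 1`
(where `p_{n,a,b}` is the best odd polynomial approximation of the constant `1` on
`[a,b]`), then `x₀ = a` and `x_n = b`. -/
theorem alternance_endpoints (n : ℕ) (hn : 1 ≤ n) (a b : ℝ) (ha : 0 < a) (hab : a < b)
    (α : ℕ → ℝ)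
    (hbest : ∀ β : ℕ → ℝ,
      unifErr a b (fun _ => (1:ℝ)) (oddPoly n α) ≤ unifErr a b (fun _ => (1:ℝ)) (oddPoly n β))
    (x : Fin (n + 1) → ℝ) (hmono : StrictMono x) (hmem : ∀ j, x j ∈ Set.Icc a b)
    (habs : ∀ j, |oddPoly n α (x j) - 1| = unifErr a b (fun _ => (1:ℝ)) (oddPoly n α))
    (halt : ∀ j : Fin n,
      oddPoly n α (x j.succ) - 1 = -(oddPoly n α (x j.castSucc) - 1)) :
    x 0 = a ∧ x (Fin.last n) = b :=
  alternance_endpoints_general n hn a b ha α x hmono hmem habs halt
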